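/- Let Z, Z̃ ∈ ℝ^{m×r} satisfy ‖Z - Z̃‖_{1,2} ≤ ε̄. Then α(Z̃) ≥ α(Z) - 2ε̄, where α(W) = min_{1≤j≤r} min_{x∈Δ} ‖W(:,j) - W(:,J)x‖₂ with J = {1,...,r}\{j}. -/

import Mathlib

noncomputable section

open scoped BigOperators

abbrev E (m : ℕ) := EuclideanSpace ℝ (Fin m)

def toE {m : ℕ} (x : Fin m → ℝ) : E m := WithLp.toLp 2 x

/-- The unit simplex `Δ = {y | y ≥ 0, ∑ y ≤ 1}`. -/
def simplex (n : Type*) [Fintype n] : Set (n → ℝ) :=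
  {y | (∀ i, 0 ≤ y i) ∧ ∑ i, y i ≤ 1}

/-- Assumption 2 of the paper: `f` is `μ`-strongly convex with `L`-Lipschitz
gradient `f'`, and `0` is its global minimizer with `f 0 = 0`. -/
structure GoodF {m : ℕ} (f : E m → ℝ) (f' : E m → E m) (μ L : ℝ) : Prop where
  mu_pos : 0 < μ
  grad : ∀ x, HasGradientAt f (f' x) x
  lip : ∀ x y : E m, ‖f' x - f' y‖ ≤ L * ‖x - y‖
  sconv : ∀ x y : E m, ∀ δ : ℝ, 0 ≤ δ → δ ≤ 1 →
    f (δ • x + (1 - δ) • y) ≤ δ * f x + (1 - δ) * f y - μ / 2 * δ * (1 - δ) * ‖x - y‖ ^ 2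
  f_zero : f 0 = 0
  min_zero : ∀ x, f 0 ≤ f x

/-- A minimizer over the unit simplex of `y ↦ f (x - B y)` (chosen via choice). -/
def argminSimplex {m : ℕ} {n : Type*} [Fintype n] (f : E m → ℝ)
    (B : Matrix (Fin m) n ℝ) (x : E m) : n → ℝ :=
  Classical.epsilon fun y => y ∈ simplex n ∧
    ∀ z ∈ simplex n, f (x - toE (B.mulVec y)) ≤ f (x - toE (B.mulVec z))

/-- The residual `R_B^f(x) = x - B y*` where `y* = argmin_{y ∈ Δ} f (x - B y)`. -/
def resid {m : ℕ} {n : Type*} [Fintype n] (f : E m → ℝ)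
    (B : Matrix (Fin m) n ℝ) (x : E m) : E m :=
  x - toE (B.mulVec (argminSimplex f B x))

/-- Column-wise residual matrix `R_B^f(A)`. -/
def residMat {m : ℕ} {n k : Type*} [Fintype n] (f : E m → ℝ)
    (B : Matrix (Fin m) n ℝ) (A : Matrix (Fin m) k ℝ) : Matrix (Fin m) k ℝ :=
  fun i j => resid f B (toE fun i' => A i' j) i

/-- `‖N‖_{1,2}`: the maximum `ℓ₂` column norm. -/
def norm12 {m : ℕ} {n : Type*} [Fintype n] (N : Matrix (Fin m) n ℝ) : ℝ :=
  sSup {c | ∃ j, c = ‖toE fun i => N i j‖}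

/-- `α(W)`: minimum distance between a column of `W` and the convex hull of the
other columns of `W` and the origin. -/
def alpha {m r : ℕ} (W : Matrix (Fin m) (Fin r) ℝ) : ℝ :=
  sInf {c | ∃ (j : Fin r) (x : Fin r → ℝ), x ∈ simplex (Fin r) ∧ x j = 0 ∧
    c = ‖toE (fun i => W i j) - toE (W.mulVec x)‖}

/-- `σ(W)`: smallest singular value (`min_{‖z‖₂ ≥ 1} ‖Wz‖₂`) if `m ≥ r`, and `0` if `m < r`. -/
def smin {m r : ℕ} (W : Matrix (Fin m) (Fin r) ℝ) : ℝ :=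
  if r ≤ m then sInf {c | ∃ z : Fin r → ℝ, 1 ≤ ‖toE z‖ ∧ c = ‖toE (W.mulVec z)‖} else 0

/-- `[B, x]`: append the column `x` to `B`. -/
def appendCol {m s : ℕ} (B : Matrix (Fin m) (Fin s) ℝ) (x : E m) :
    Matrix (Fin m) (Fin (s + 1)) ℝ :=
  fun i => Fin.snoc (fun j => B i j) (x i)

/-- `[A, B]`: horizontal concatenation. -/
def appendMat {m k s : ℕ} (A : Matrix (Fin m) (Fin k) ℝ) (B : Matrix (Fin m) (Fin s) ℝ) :
    Matrix (Fin m) (Fin (k + s)) ℝ :=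
  fun i => Fin.append (fun j => A i j) (fun j => B i j)

/-- `ω(P) = min (min_i ‖p_i‖₂, (1/√2) min_{i ≠ j} ‖p_i - p_j‖₂)`. -/
def omegaM {m : ℕ} {k : Type*} [Fintype k] (P : Matrix (Fin m) k ℝ) : ℝ :=
  sInf ({c | ∃ i, c = ‖toE fun a => P a i‖} ∪
    {c | ∃ i j, i ≠ j ∧ c = (Real.sqrt 2)⁻¹ * ‖(toE fun a => P a i) - toE fun a => P a j‖})

/-- `β(W) = min (ν_β(W), γ_β(W)/√2)` as in the paper. -/
def beta {m r : ℕ} (f : E m → ℝ) (W : Matrix (Fin m) (Fin r) ℝ) : ℝ :=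
  sInf ({c | ∃ j : Fin r,
      c = ‖resid f (W.submatrix id fun p : {i // i ≠ j} => (p : Fin r)) (toE fun a => W a j)‖} ∪
    {c | ∃ (i j : Fin r) (J : Finset (Fin r)), i ≠ j ∧ i ∉ J ∧ j ∉ J ∧
      c = (Real.sqrt 2)⁻¹ *
        ‖resid f (W.submatrix id fun p : J => (p : Fin r)) (toE fun a => W a i) -
         resid f (W.submatrix id fun p : J => (p : Fin r)) (toE fun a => W a j)‖})

/-- Singular values of `B` in nonincreasing order (`i`-th largest at index `i`). -/
def singVals {m s : ℕ} (B : Matrix (Fin m) (Fin s) ℝ) : Fin s → ℝ := fun i =>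
  Real.sqrt (((show (B.transpose * B).IsHermitian by simpa using Matrix.isHermitian_conjTranspose_mul_self B).eigenvalues ∘
    Tuple.sort (show (B.transpose * B).IsHermitian by simpa using Matrix.isHermitian_conjTranspose_mul_self B).eigenvalues) i.rev)

/-- The spectral norm `‖N‖₂` (ℓ₂ operator norm). -/
def spec {m s : ℕ} (N : Matrix (Fin m) (Fin s) ℝ) : ℝ :=
  ‖LinearMap.toContinuousLinearMap (Matrix.toEuclideanLin N)‖

/-! The perturbation `D = Z - Zt` moves a column by at most `‖D‖_{1,2}`, and moves a point of the
hull of the other columns and the origin by at most `‖D‖_{1,2}` too, since `D` maps the simplex into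
the ball of that radius. So every distance defining `α(Z)` exceeds the matching distance for `Zt` by
at most `2 ‖D‖_{1,2}`. -/

theorem zero_mem_simplex (n : Type*) [Fintype n] : (0 : n → ℝ) ∈ simplex n :=
  ⟨fun _ => le_rfl, by simp⟩

section Norm12

variable {m : ℕ} {n : Type*} [Fintype n]

theorem norm12_nonneg (N : Matrix (Fin m) n ℝ) : 0 ≤ norm12 N :=
  Real.sSup_nonneg (by rintro _ ⟨j, rfl⟩; exact norm_nonneg _)

theorem norm_col_le_norm12 (N : Matrix (Fin m) n ℝ) (j : n) :
    ‖toE fun i => N i j‖ ≤ norm12 N := by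
  have hfin : {c | ∃ j, c = ‖toE fun i => N i j‖}.Finite := by
    simpa only [Set.range, eq_comm] using Set.finite_range fun j => ‖toE fun i => N i j‖
  exact le_csSup hfin.bddAbove ⟨j, rfl⟩

theorem toE_mulVec_eq_sum (N : Matrix (Fin m) n ℝ) (x : n → ℝ) :
    toE (N.mulVec x) = ∑ j, x j • toE fun i => N i j := by
  ext i
  simp [toE, Matrix.mulVec, dotProduct, mul_comm]

theorem norm_mulVec_le_norm12 (N : Matrix (Fin m) n ℝ) {x : n → ℝ} (hx : x ∈ simplex n) :
    ‖toE (N.mulVec x)‖ ≤ norm12 N := by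
  obtain ⟨hx_nonneg, hx_sum⟩ := hx
  calc ‖toE (N.mulVec x)‖ = ‖∑ j, x j • toE fun i => N i j‖ := by rw [toE_mulVec_eq_sum]
    _ ≤ ∑ j, ‖x j • toE fun i => N i j‖ := norm_sum_le _ _
    _ = ∑ j, x j * ‖toE fun i => N i j‖ := by
        simp only [norm_smul, Real.norm_eq_abs, abs_of_nonneg (hx_nonneg _)]
    _ ≤ ∑ j, x j * norm12 N :=
        Finset.sum_le_sum fun j _ =>
          mul_le_mul_of_nonneg_left (norm_col_le_norm12 N j) (hx_nonneg j)
    _ = (∑ j, x j) * norm12 N := (Finset.sum_mul _ _ _).symm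
    _ ≤ norm12 N := mul_le_of_le_one_left (norm12_nonneg N) hx_sum

theorem norm_col_sub_mulVec_le (A B : Matrix (Fin m) n ℝ) (j : n) {x : n → ℝ}
    (hx : x ∈ simplex n) :
    ‖toE (fun i => A i j) - toE (A.mulVec x)‖ ≤
      ‖toE (fun i => B i j) - toE (B.mulVec x)‖ + 2 * norm12 (A - B) := by
  have hsplit : toE (fun i => A i j) - toE (A.mulVec x) =
      (toE (fun i => B i j) - toE (B.mulVec x)) +
        ((toE fun i => (A - B) i j) - toE ((A - B).mulVec x)) := by
    ext i
    simp only [toE, PiLp.sub_apply, Matrix.sub_apply, Matrix.sub_mulVec, WithLp.toLp_sub,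
      PiLp.add_apply]
    ring
  calc ‖toE (fun i => A i j) - toE (A.mulVec x)‖
      ≤ ‖toE (fun i => B i j) - toE (B.mulVec x)‖ +
          (‖toE fun i => (A - B) i j‖ + ‖toE ((A - B).mulVec x)‖) := by
        rw [hsplit]
        exact (norm_add_le _ _).trans (add_le_add_right (norm_sub_le _ _) _)
    _ ≤ ‖toE (fun i => B i j) - toE (B.mulVec x)‖ + 2 * norm12 (A - B) := by
        linarith [norm_col_le_norm12 (A - B) j, norm_mulVec_le_norm12 (A - B) hx]

end Norm12

section Alpha

variable {m r : ℕ}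

theorem alpha_le (W : Matrix (Fin m) (Fin r) ℝ) {j : Fin r} {x : Fin r → ℝ}
    (hx : x ∈ simplex (Fin r)) (hxj : x j = 0) :
    alpha W ≤ ‖toE (fun i => W i j) - toE (W.mulVec x)‖ :=
  csInf_le ⟨0, by rintro _ ⟨_, _, _, _, rfl⟩; exact norm_nonneg _⟩ ⟨j, x, hx, hxj, rfl⟩

theorem le_alpha (W : Matrix (Fin m) (Fin r) ℝ) (hr : 0 < r) {c : ℝ}
    (h : ∀ j x, x ∈ simplex (Fin r) → x j = 0 → c ≤ ‖toE (fun i => W i j) - toE (W.mulVec x)‖) :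
    c ≤ alpha W :=
  le_csInf ⟨_, ⟨⟨0, hr⟩, 0, zero_mem_simplex _, rfl, rfl⟩⟩
    (by rintro _ ⟨j, x, hx, hxj, rfl⟩; exact h j x hx hxj)

theorem alpha_of_fin_zero (W : Matrix (Fin m) (Fin 0) ℝ) : alpha W = 0 := by
  have hempty : {c | ∃ (j : Fin 0) (x : Fin 0 → ℝ), x ∈ simplex (Fin 0) ∧ x j = 0 ∧
      c = ‖toE (fun i => W i j) - toE (W.mulVec x)‖} = ∅ :=
    Set.eq_empty_of_forall_notMem fun _ ⟨j, _⟩ => j.elim0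
  rw [alpha, hempty, Real.sInf_empty]

theorem alpha_sub_two_norm12_le (Z Zt : Matrix (Fin m) (Fin r) ℝ) :
    alpha Z - 2 * norm12 (Z - Zt) ≤ alpha Zt := by
  obtain rfl | hr := Nat.eq_zero_or_pos r
  · rw [alpha_of_fin_zero, alpha_of_fin_zero]
    linarith [norm12_nonneg (Z - Zt)]
  refine le_alpha Zt hr fun j x hx hxj => ?_
  linarith [alpha_le Z hx hxj, norm_col_sub_mulVec_le Z Zt j hx]

end Alpha

theorem stmt6 (m r : ℕ) (Z Zt : Matrix (Fin m) (Fin r) ℝ) (eps : ℝ)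
    (hN : norm12 (Z - Zt) ≤ eps) :
    alpha Z - 2 * eps ≤ alpha Zt := by
  linarith [alpha_sub_two_norm12_le Z Zt]
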